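/- Let V be a bounded function on Δ satisfying the Bellman equation for subsidy m, and define the active set A(m) = {ω ∈ Δ : ω·B + β Σ_{k<K} ω_k V(p_k) > m + β V(ωP)}. Then A(m) is a convex subset of ℝ^K, and A(m) is open in the subspace topology of Δ. -/

import Mathlib

/-!
The first branch of the Bellman equation is linear, `ω ⬝ᵥ c` with `c k = B k + β V(p_k)`.
For a bounded solution `V` of `V = max g (m + β V ∘ f)`, a "defect" `d` of `V` (the failure of
convexity at a convex combination, or the excess of `|V x - V y|` over `L · ρ(x, y)`) satisfies
`d ≤ max 0 (β · d ∘ φ)` for the induced map `φ`, and boundedness with `β < 1` forces `d ≤ 0`.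
Since `g` is linear and `ω ↦ ωP` is linear and nonexpanding in `ℓ¹` on the simplex, `V` is convex
and `ℓ¹`-Lipschitz on `Δ`. Hence `A(m)` is the strict sublevel set `{m + β V(ωP) - ω ⬝ᵥ c < 0}`
of a convex continuous function on `Δ`.
-/

open Set Filter Topology Matrix

theorem nonpos_of_le_max_zero_mul_comp {Y : Type*} {t : Set Y} {φ : Y → Y} {d : Y → ℝ}
    {β C : ℝ} (hβ₀ : 0 ≤ β) (hβ₁ : β < 1) (hφ : MapsTo φ t t) (hC : ∀ y ∈ t, d y ≤ C)
    (hd : ∀ y ∈ t, d y ≤ max 0 (β * d (φ y))) : ∀ y ∈ t, d y ≤ 0 := by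
  have hiter : ∀ n : ℕ, ∀ y ∈ t, d y ≤ β ^ n * max C 0 := by
    intro n
    induction n with
    | zero => exact fun y hy => by simpa using (hC y hy).trans (le_max_left C 0)
    | succ n ih =>
      intro y hy
      calc d y ≤ max 0 (β * d (φ y)) := hd y hy
        _ ≤ max 0 (β * (β ^ n * max C 0)) :=
          max_le_max le_rfl (mul_le_mul_of_nonneg_left (ih _ (hφ hy)) hβ₀)
        _ = β ^ (n + 1) * max C 0 := by
          rw [max_eq_right (by positivity), pow_succ']; ring
  intro y hy
  have hlim : Tendsto (fun n : ℕ => β ^ n * max C 0) atTop (𝓝 0) := by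
    simpa using (tendsto_pow_atTop_nhds_zero_of_lt_one hβ₀ hβ₁).mul_const (max C 0)
  exact ge_of_tendsto' hlim fun n => hiter n y hy

theorem abs_sub_le_of_bellman {X : Type*} {s : Set X} {f : X → X} {g V : X → ℝ} {β m C : ℝ}
    (hβ₀ : 0 ≤ β) (hβ₁ : β < 1) (hf : MapsTo f s s)
    (hC : ∀ x ∈ s, |V x| ≤ C) (hV : ∀ x ∈ s, V x = max (g x) (m + β * V (f x)))
    {ρ : X → X → ℝ} {L : ℝ} (hL : 0 ≤ L) (hρ : ∀ x ∈ s, ∀ y ∈ s, 0 ≤ ρ x y)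
    (hg : ∀ x ∈ s, ∀ y ∈ s, |g x - g y| ≤ L * ρ x y)
    (hfρ : ∀ x ∈ s, ∀ y ∈ s, ρ (f x) (f y) ≤ ρ x y) :
    ∀ x ∈ s, ∀ y ∈ s, |V x - V y| ≤ L * ρ x y := by
  let d : X × X → ℝ := fun p => |V p.1 - V p.2| - L * ρ p.1 p.2
  have hmaps : MapsTo (Prod.map f f) (s ×ˢ s) (s ×ˢ s) := fun p hp => ⟨hf hp.1, hf hp.2⟩
  have hbdd : ∀ p ∈ s ×ˢ s, d p ≤ 2 * C := fun p hp => by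
    have := mul_nonneg hL (hρ _ hp.1 _ hp.2)
    have := abs_sub (V p.1) (V p.2)
    linarith [hC _ hp.1, hC _ hp.2]
  have hstep : ∀ p ∈ s ×ˢ s, d p ≤ max 0 (β * d (Prod.map f f p)) := by
    rintro ⟨x, y⟩ ⟨hx, hy⟩
    have hmax : |V x - V y| ≤ max |g x - g y| (β * |V (f x) - V (f y)|) := by
      rw [hV x hx, hV y hy]
      refine (abs_max_sub_max_le_max _ _ _ _).trans_eq ?_
      rw [add_sub_add_left_eq_sub, ← mul_sub, abs_mul, abs_of_nonneg hβ₀]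
    have hcontract : β * (L * ρ (f x) (f y)) ≤ L * ρ x y :=
      calc β * (L * ρ (f x) (f y)) ≤ L * ρ (f x) (f y) :=
            mul_le_of_le_one_left (mul_nonneg hL (hρ _ (hf hx) _ (hf hy))) hβ₁.le
        _ ≤ L * ρ x y := mul_le_mul_of_nonneg_left (hfρ x hx y hy) hL
    simp only [d, Prod.map]
    rcases le_max_iff.1 hmax with h | h
    · exact le_max_of_le_left (by linarith [hg x hx y hy])
    · exact le_max_of_le_right (by linarith)
  intro x hx y hy
  linarith [nonpos_of_le_max_zero_mul_comp hβ₀ hβ₁ hmaps hbdd hstep (x, y) ⟨hx, hy⟩]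

theorem convexOn_of_bellman {E : Type*} [AddCommGroup E] [Module ℝ E] {s : Set E}
    {f : E →ₗ[ℝ] E} {g V : E → ℝ} {β m C : ℝ} (hβ₀ : 0 ≤ β) (hβ₁ : β < 1) (hf : MapsTo f s s)
    (hC : ∀ x ∈ s, |V x| ≤ C) (hV : ∀ x ∈ s, V x = max (g x) (m + β * V (f x)))
    (hg : ConvexOn ℝ s g) : ConvexOn ℝ s V := by
  let t : Set (E × E × ℝ × ℝ) := {p | p.1 ∈ s ∧ p.2.1 ∈ s ∧ 0 ≤ p.2.2.1 ∧ 0 ≤ p.2.2.2 ∧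
    p.2.2.1 + p.2.2.2 = 1}
  let d : E × E × ℝ × ℝ → ℝ := fun ⟨x, y, a, b⟩ => V (a • x + b • y) - a * V x - b * V y
  let φ : E × E × ℝ × ℝ → E × E × ℝ × ℝ := fun ⟨x, y, a, b⟩ => (f x, f y, a, b)
  have hmaps : MapsTo φ t t := fun ⟨x, y, a, b⟩ ⟨hx, hy, hab⟩ => ⟨hf hx, hf hy, hab⟩
  have hbdd : ∀ p ∈ t, d p ≤ 2 * C := by
    rintro ⟨x, y, a, b⟩ ⟨hx, hy, ha, hb, hab⟩
    dsimp only at hx hy ha hb hab ⊢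
    have hVx := mul_le_mul_of_nonneg_left (neg_le_of_abs_le (hC x hx)) ha
    have hVy := mul_le_mul_of_nonneg_left (neg_le_of_abs_le (hC y hy)) hb
    have hVz := le_of_abs_le (hC _ (hg.1 hx hy ha hb hab))
    have hCab : a * C + b * C = C := by rw [← add_mul, hab, one_mul]
    simp only [d]
    linarith
  have hstep : ∀ p ∈ t, d p ≤ max 0 (β * d (φ p)) := by
    rintro ⟨x, y, a, b⟩ ⟨hx, hy, ha, hb, hab⟩
    dsimp only at hx hy ha hb hab ⊢
    have hle (z) (hz : z ∈ s) : g z ≤ V z ∧ m + β * V (f z) ≤ V z := by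
      rw [hV z hz]; exact ⟨le_max_left _ _, le_max_right _ _⟩
    have hgz : g (a • x + b • y) ≤ a * V x + b * V y := by
      have := hg.2 hx hy ha hb hab
      simp only [smul_eq_mul] at this
      nlinarith [(hle x hx).1, (hle y hy).1]
    have hcont : m + β * V (a • f x + b • f y) ≤ a * V x + b * V y +
        β * (V (a • f x + b • f y) - a * V (f x) - b * V (f y)) := by
      have hm : m = a * m + b * m := by rw [← add_mul, hab, one_mul]
      nlinarith [mul_le_mul_of_nonneg_left (hle x hx).2 ha,
        mul_le_mul_of_nonneg_left (hle y hy).2 hb]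
    simp only [d, φ]
    rw [hV _ (hg.1 hx hy ha hb hab), map_add, map_smul, map_smul]
    rcases le_total (g (a • x + b • y)) (m + β * V (a • f x + b • f y)) with h | h
    · rw [max_eq_right h]; exact le_max_of_le_right (by linarith)
    · rw [max_eq_left h]; exact le_max_of_le_left (by linarith)
  refine ⟨hg.1, fun x hx y hy a b ha hb hab => ?_⟩
  have := nonpos_of_le_max_zero_mul_comp hβ₀ hβ₁ hmaps hbdd hstep (x, y, a, b) ⟨hx, hy, ha, hb, hab⟩
  simp only [d, smul_eq_mul] at this ⊢
  linarith

theorem abs_dotProduct_le {n : Type*} [Fintype n] (x c : n → ℝ) :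
    |x ⬝ᵥ c| ≤ ‖c‖ * ∑ i, |x i| :=
  calc |x ⬝ᵥ c| ≤ ∑ i, |x i| * ‖c‖ :=
        (Finset.abs_sum_le_sum_abs _ _).trans <| Finset.sum_le_sum fun i _ => by
          rw [abs_mul, ← Real.norm_eq_abs (c i)]
          exact mul_le_mul_of_nonneg_left (norm_le_pi_norm c i) (abs_nonneg _)
    _ = ‖c‖ * ∑ i, |x i| := by rw [← Finset.sum_mul, mul_comm]

theorem continuousOn_of_abs_sub_le_mul_sum_abs {n : Type*} [Fintype n] {s : Set (n → ℝ)}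
    {F : (n → ℝ) → ℝ} {L : ℝ} (hF : ∀ x ∈ s, ∀ y ∈ s, |F x - F y| ≤ L * ∑ i, |x i - y i|) :
    ContinuousOn F s := by
  refine (LipschitzOnWith.of_dist_le_mul (K := (max L 0 * Fintype.card n).toNNReal)
    fun x hx y hy => ?_).continuousOn
  have hsum : ∑ i, |x i - y i| ≤ Fintype.card n * dist x y := by
    simpa [← Real.dist_eq] using
      Finset.sum_le_sum fun i (_ : i ∈ Finset.univ) => dist_le_pi_dist x y i
  rw [Real.dist_eq, Real.coe_toNNReal _ (by positivity), mul_assoc]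
  calc |F x - F y| ≤ L * ∑ i, |x i - y i| := hF x hx y hy
    _ ≤ max L 0 * ∑ i, |x i - y i| :=
        mul_le_mul_of_nonneg_right (le_max_left L 0) (Finset.sum_nonneg fun i _ => abs_nonneg _)
    _ ≤ max L 0 * (Fintype.card n * dist x y) :=
        mul_le_mul_of_nonneg_left hsum (le_max_right L 0)

section RowStochastic

variable {n : Type*} [Fintype n] [DecidableEq n] {P : Matrix n n ℝ}

theorem vecMul_mem_stdSimplex (hP : P ∈ rowStochastic ℝ n) {x : n → ℝ}
    (hx : x ∈ stdSimplex ℝ n) : x ᵥ* P ∈ stdSimplex ℝ n := by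
  refine ⟨nonneg_vecMul_of_mem_rowStochastic hP hx.1, ?_⟩
  rw [← dotProduct_one]
  exact vecMul_dotProduct_one_eq_one_rowStochastic hP (by rw [dotProduct_one, hx.2])

theorem mapsTo_vecMulLinear_stdSimplex (hP : P ∈ rowStochastic ℝ n) :
    MapsTo (vecMulLinear P) (stdSimplex ℝ n) (stdSimplex ℝ n) :=
  fun _ hx => vecMul_mem_stdSimplex hP hx

theorem sum_abs_vecMul_le (hP : P ∈ rowStochastic ℝ n) (x : n → ℝ) :
    ∑ j, |(x ᵥ* P) j| ≤ ∑ i, |x i| :=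
  calc ∑ j, |(x ᵥ* P) j| ≤ ∑ j, ∑ i, |x i| * P i j :=
        Finset.sum_le_sum fun j _ => (Finset.abs_sum_le_sum_abs _ _).trans_eq <|
          Finset.sum_congr rfl fun i _ => by
            rw [abs_mul, abs_of_nonneg (nonneg_of_mem_rowStochastic hP)]
    _ = ∑ i, |x i| := by
        rw [Finset.sum_comm]
        simp only [← Finset.mul_sum, sum_row_of_mem_rowStochastic hP, mul_one]

variable {c : n → ℝ} {V : (n → ℝ) → ℝ} {β m C : ℝ}

theorem convexOn_stdSimplex_of_bellman (hP : P ∈ rowStochastic ℝ n) (hβ₀ : 0 ≤ β)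
    (hβ₁ : β < 1) (hC : ∀ ω ∈ stdSimplex ℝ n, |V ω| ≤ C)
    (hV : ∀ ω ∈ stdSimplex ℝ n, V ω = max (ω ⬝ᵥ c) (m + β * V (ω ᵥ* P))) :
    ConvexOn ℝ (stdSimplex ℝ n) V :=
  convexOn_of_bellman hβ₀ hβ₁ (mapsTo_vecMulLinear_stdSimplex hP) hC hV
    (((dotProductBilin ℝ ℝ).flip c).convexOn (convex_stdSimplex ℝ n))

theorem continuousOn_stdSimplex_of_bellman (hP : P ∈ rowStochastic ℝ n) (hβ₀ : 0 ≤ β)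
    (hβ₁ : β < 1) (hC : ∀ ω ∈ stdSimplex ℝ n, |V ω| ≤ C)
    (hV : ∀ ω ∈ stdSimplex ℝ n, V ω = max (ω ⬝ᵥ c) (m + β * V (ω ᵥ* P))) :
    ContinuousOn V (stdSimplex ℝ n) :=
  continuousOn_of_abs_sub_le_mul_sum_abs <|
    abs_sub_le_of_bellman hβ₀ hβ₁ (mapsTo_vecMulLinear_stdSimplex hP) hC hV
      (norm_nonneg c) (fun _ _ _ _ => Finset.sum_nonneg fun _ _ => abs_nonneg _)
      (fun x _ y _ => by
        simpa only [sub_dotProduct, Pi.sub_apply] using abs_dotProduct_le (x - y) c)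
      (fun x _ y _ => by
        simpa only [coe_vecMulLinear, sub_vecMul, Pi.sub_apply] using sum_abs_vecMul_le hP (x - y))

end RowStochastic

theorem active_set_convex_open_general (K : ℕ)
    (P : Matrix (Fin K) (Fin K) ℝ)
    (hPnn : ∀ i j, 0 ≤ P i j) (hProw : ∀ i, ∑ j, P i j = 1)
    (B : Fin K → ℝ)
    (β : ℝ) (hβ₀ : 0 < β) (hβ₁ : β < 1) (m : ℝ)
    (V : (Fin K → ℝ) → ℝ)
    (hbd : ∃ C, ∀ ω ∈ stdSimplex ℝ (Fin K), |V ω| ≤ C)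
    (hBell : ∀ ω ∈ stdSimplex ℝ (Fin K),
      V ω = max (ω ⬝ᵥ B + β * ∑ k, ω k * V (P k)) (m + β * V (ω ᵥ* P)))
    (A : Set (Fin K → ℝ))
    (hA : A = {ω ∈ stdSimplex ℝ (Fin K) |
      m + β * V (ω ᵥ* P) < ω ⬝ᵥ B + β * ∑ k, ω k * V (P k)}) :
    Convex ℝ A ∧ IsOpen (Subtype.val ⁻¹' A : Set (stdSimplex ℝ (Fin K))) := by
  obtain ⟨C, hC⟩ := hbd
  have hP : P ∈ rowStochastic ℝ (Fin K) := mem_rowStochastic_iff_sum.2 ⟨hPnn, hProw⟩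
  set c : Fin K → ℝ := B + β • fun k => V (P k)
  have hc (ω : Fin K → ℝ) : ω ⬝ᵥ B + β * ∑ k, ω k * V (P k) = ω ⬝ᵥ c := by
    rw [dotProduct_add, dotProduct_smul, smul_eq_mul]; rfl
  simp only [hc] at hBell hA
  have hconv := convexOn_stdSimplex_of_bellman hP hβ₀.le hβ₁ hC hBell
  have hcont := continuousOn_stdSimplex_of_bellman hP hβ₀.le hβ₁ hC hBell
  have hcontP : ContinuousOn (fun ω => V (ω ᵥ* P)) (stdSimplex ℝ (Fin K)) :=
    hcont.comp (continuous_id.matrix_vecMul continuous_const).continuousOn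
      (mapsTo_vecMulLinear_stdSimplex hP)
  subst hA
  constructor
  · have hF : ConvexOn ℝ (stdSimplex ℝ (Fin K)) (fun ω => m + β * V (ω ᵥ* P) - ω ⬝ᵥ c) :=
      ((convexOn_const m (convex_stdSimplex ℝ _)).add
        (((hconv.comp_linearMap (vecMulLinear P)).subset (mapsTo_vecMulLinear_stdSimplex hP)
          (convex_stdSimplex ℝ _)).smul hβ₀.le)).sub
        (((dotProductBilin ℝ ℝ).flip c).concaveOn (convex_stdSimplex ℝ _))
    simpa only [sub_neg] using hF.convex_lt 0
  · simp only [preimage_ofPred_eq, Subtype.coe_prop, true_and]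
    exact isOpen_lt (continuous_const.add (continuous_const.mul hcontP.domRestrict))
      (continuous_subtype_val.dotProduct continuous_const)

/-- The active set `A(m)` is convex and open in the subspace topology of the simplex. -/
theorem active_set_convex_open (K : ℕ) (hK : 1 ≤ K)
    (P : Matrix (Fin K) (Fin K) ℝ)
    (hPnn : ∀ i j, 0 ≤ P i j) (hProw : ∀ i, ∑ j, P i j = 1)
    (B : Fin K → ℝ) (hB : ∀ i, 0 ≤ B i)
    (β : ℝ) (hβ₀ : 0 < β) (hβ₁ : β < 1) (m : ℝ)
    (V : (Fin K → ℝ) → ℝ)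
    (hbd : ∃ C, ∀ ω ∈ stdSimplex ℝ (Fin K), |V ω| ≤ C)
    (hBell : ∀ ω ∈ stdSimplex ℝ (Fin K),
      V ω = max (ω ⬝ᵥ B + β * ∑ k, ω k * V (P k)) (m + β * V (ω ᵥ* P)))
    (A : Set (Fin K → ℝ))
    (hA : A = {ω ∈ stdSimplex ℝ (Fin K) |
      m + β * V (ω ᵥ* P) < ω ⬝ᵥ B + β * ∑ k, ω k * V (P k)}) :
    Convex ℝ A ∧ IsOpen (Subtype.val ⁻¹' A : Set (stdSimplex ℝ (Fin K))) :=
  active_set_convex_open_general K P hPnn hProw B β hβ₀ hβ₁ m V hbd hBell A hA
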